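/- Let λ be a real constant and let f : ℝⁿ → ℝ be a smooth function satisfying Σ_{i,j} g^{ij} f_{ij} = -f + Σ_i x_i f_i + λ√(1+|Df|²) on ℝⁿ. If the function ψ = log det(g_{ij}) is constant on ℝⁿ, then the Hessian of f vanishes identically (f_{pi} = 0 for all p, i), and hence f is affine. -/

import Mathlib

/-- The `i`-th partial derivative of a function `f : ℝⁿ → ℝ`. -/
noncomputable def pd {n : ℕ} (f : (Fin n → ℝ) → ℝ) (i : Fin n) (x : Fin n → ℝ) : ℝ :=
  fderiv ℝ f x (Pi.single i 1)

/-- The induced metric `g_{ij} = δ_{ij} + f_i f_j` of the graph of `f`. -/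
noncomputable def gMat {n : ℕ} (f : (Fin n → ℝ) → ℝ) (x : Fin n → ℝ) :
    Matrix (Fin n) (Fin n) ℝ :=
  Matrix.of fun i j => (if i = j then (1 : ℝ) else 0) + pd f i x * pd f j x

/-- The inverse metric `(g^{ij})`. -/
noncomputable def gInv {n : ℕ} (f : (Fin n → ℝ) → ℝ) (x : Fin n → ℝ) :
    Matrix (Fin n) (Fin n) ℝ :=
  (gMat f x)⁻¹

namespace LamHelp
variable {n : ℕ}

lemma pd_smooth {f : (Fin n → ℝ) → ℝ} (hf : ContDiff ℝ (⊤ : ℕ∞) f) (i : Fin n) :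
    ContDiff ℝ (⊤ : ℕ∞) (pd f i) :=
  (hf.fderiv_right (by simp)).clm_apply contDiff_const

lemma pd_of_const {u : (Fin n → ℝ) → ℝ} {c : ℝ} (h : ∀ y, u y = c) (i : Fin n)
    (x : Fin n → ℝ) : pd u i x = 0 := by
  have : u = fun _ => c := funext h
  rw [this]; simp [pd]

lemma pd_sum {ι : Type*} (s : Finset ι) (F : ι → (Fin n → ℝ) → ℝ) (i : Fin n) (x : Fin n → ℝ)
    (hF : ∀ j ∈ s, DifferentiableAt ℝ (F j) x) :
    pd (fun y => ∑ j ∈ s, F j y) i x = ∑ j ∈ s, pd (F j) i x := by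
  unfold pd
  rw [fderiv_fun_sum hF]
  simp

lemma pd_mul {u v : (Fin n → ℝ) → ℝ} (i : Fin n) (x : Fin n → ℝ)
    (hu : DifferentiableAt ℝ u x) (hv : DifferentiableAt ℝ v x) :
    pd (fun y => u y * v y) i x = pd u i x * v x + u x * pd v i x := by
  unfold pd
  rw [fderiv_fun_mul hu hv]
  simp only [ContinuousLinearMap.add_apply, ContinuousLinearMap.smul_apply, smul_eq_mul]
  ring

lemma pd_add {u v : (Fin n → ℝ) → ℝ} (i : Fin n) (x : Fin n → ℝ)
    (hu : DifferentiableAt ℝ u x) (hv : DifferentiableAt ℝ v x) :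
    pd (fun y => u y + v y) i x = pd u i x + pd v i x := by
  unfold pd
  rw [fderiv_fun_add hu hv]
  simp

lemma pd_neg {u : (Fin n → ℝ) → ℝ} (i : Fin n) (x : Fin n → ℝ) :
    pd (fun y => -u y) i x = -pd u i x := by
  unfold pd
  rw [fderiv_fun_neg]
  simp

lemma pd_coord (j i : Fin n) (x : Fin n → ℝ) :
    pd (fun y => y j) i x = if i = j then 1 else 0 := by
  have : (fun y : Fin n → ℝ => y j) = (ContinuousLinearMap.proj (R := ℝ)
      (φ := fun _ : Fin n => ℝ) j) := rfl
  rw [pd, this, ContinuousLinearMap.fderiv]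
  simp [Pi.single_apply, eq_comm]

lemma pd_comm {f : (Fin n → ℝ) → ℝ} (hf : ContDiff ℝ (⊤ : ℕ∞) f) (i j : Fin n) (x : Fin n → ℝ) :
    pd (pd f i) j x = pd (pd f j) i x := by
  have hd : ∀ y, HasFDerivAt f (fderiv ℝ f y) y := fun y =>
    (hf.differentiable (by simp) y).hasFDerivAt
  have h2 : ContDiff ℝ (⊤ : ℕ∞) (fderiv ℝ f) := hf.fderiv_right (by simp)
  have hx : HasFDerivAt (fderiv ℝ f) (fderiv ℝ (fderiv ℝ f) x) x :=
    (h2.differentiable (by simp) x).hasFDerivAt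
  have key := second_derivative_symmetric hd hx
  have expand : ∀ v : Fin n → ℝ, fderiv ℝ (fun y => fderiv ℝ f y v) x
      = (fderiv ℝ (fderiv ℝ f) x).flip v := by
    intro v
    have := fderiv_clm_apply (c := fderiv ℝ f) (u := fun _ => v)
      (h2.differentiable (by simp) x) (differentiableAt_const v)
    simpa using this
  show fderiv ℝ (fun y => fderiv ℝ f y (Pi.single i 1)) x (Pi.single j 1)
      = fderiv ℝ (fun y => fderiv ℝ f y (Pi.single j 1)) x (Pi.single i 1)
  rw [expand, expand]
  exact key _ _

lemma clm_apply_eq_sum (L : (Fin n → ℝ) →L[ℝ] ℝ) (v : Fin n → ℝ) :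
    L v = ∑ i, v i * L (Pi.single i 1) := by
  have hv : v = ∑ i, v i • (Pi.single i 1 : Fin n → ℝ) := by
    funext j
    simp [Pi.single_apply, Finset.sum_ite_eq]
  conv_lhs => rw [hv]
  rw [map_sum]
  simp [smul_eq_mul]

end LamHelp

open LamHelp in
/-- For an entire smooth solution of the graphic `λ`-hypersurface equation, if
`ψ = log det(g_{ij})` is constant, then the Hessian of `f` vanishes identically and
`f` is affine. -/
theorem lambda_hypersurface_log_det_constant_implies_affine
    {n : ℕ} (lam : ℝ) (f : (Fin n → ℝ) → ℝ) (hf : ContDiff ℝ (⊤ : ℕ∞) f)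
    (heq : ∀ x : Fin n → ℝ,
      ∑ i, ∑ j, gInv f x i j * pd (pd f j) i x
        = -f x + ∑ i, x i * pd f i x
          + lam * Real.sqrt (1 + ∑ i, (pd f i x) ^ 2))
    (hconst : ∃ c : ℝ, ∀ x : Fin n → ℝ, Real.log (gMat f x).det = c) :
    (∀ (p i : Fin n) (x : Fin n → ℝ), pd (pd f i) p x = 0)
      ∧ ∃ (b : Fin n → ℝ) (c : ℝ), ∀ x, f x = (∑ i, b i * x i) + c := by
  obtain ⟨ψ, hψ⟩ := hconst
  -- basic differentiability
  have hd1 : ∀ i, Differentiable ℝ (pd f i) := fun i => (pd_smooth hf i).differentiable (by simp)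
  have hd2 : ∀ i j, Differentiable ℝ (pd (pd f i) j) := fun i j =>
    (pd_smooth (pd_smooth hf i) j).differentiable (by simp)
  -- determinant formula
  have hdet : ∀ x, (gMat f x).det = 1 + ∑ i, pd f i x ^ 2 := by
    intro x
    have : gMat f x = 1 + Matrix.replicateCol Unit (fun i => pd f i x) * Matrix.replicateRow Unit (fun i => pd f i x) := by
      ext i j
      simp [gMat, Matrix.mul_apply, Matrix.one_apply]
    rw [this, Matrix.det_one_add_replicateCol_mul_replicateRow]
    simp [dotProduct, sq]
  have hpos : ∀ x : Fin n → ℝ, (0:ℝ) < 1 + ∑ i, pd f i x ^ 2 := by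
    intro x
    have : (0:ℝ) ≤ ∑ i, pd f i x ^ 2 := Finset.sum_nonneg fun i _ => sq_nonneg _
    linarith
  set S : ℝ := 1 + ∑ i, pd f i 0 ^ 2 with hSdef
  have hS : ∀ x, 1 + ∑ i, pd f i x ^ 2 = S := by
    intro x
    have h1 : Real.log (1 + ∑ i, pd f i x ^ 2) = Real.log S := by
      rw [hSdef, ← hdet x, ← hdet 0, hψ x, hψ 0]
    calc 1 + ∑ i, pd f i x ^ 2 = Real.exp (Real.log (1 + ∑ i, pd f i x ^ 2)) :=
          (Real.exp_log (hpos x)).symm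
      _ = Real.exp (Real.log S) := by rw [h1]
      _ = S := Real.exp_log (hpos 0)
  -- Step A : first derivative of the constant |Df|^2
  have hA : ∀ (p : Fin n) (x : Fin n → ℝ), ∑ j, pd f j x * pd (pd f j) p x = 0 := by
    intro p x
    have h0 : pd (fun y => ∑ j, pd f j y ^ 2) p x = 0 :=
      pd_of_const (c := S - 1) (fun y => by have := hS y; linarith) p x
    have h1 : pd (fun y => ∑ j, pd f j y ^ 2) p x
        = ∑ j, 2 * (pd f j x * pd (pd f j) p x) := by
      rw [pd_sum Finset.univ _ p x (fun j _ => ((hd1 j x).fun_mul (hd1 j x)).congr_of_eventuallyEq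
        (by filter_upwards with y; rw [sq]))]
      refine Finset.sum_congr rfl fun j _ => ?_
      have : (fun y => pd f j y ^ 2) = fun y => pd f j y * pd f j y := by
        funext y; rw [sq]
      rw [this, pd_mul p x (hd1 j x) (hd1 j x)]
      ring
    rw [h1] at h0
    rw [← Finset.mul_sum] at h0
    linarith
  -- trace simplification of the equation
  have htrace : ∀ x, ∑ i, ∑ j, gInv f x i j * pd (pd f j) i x = ∑ i, pd (pd f i) i x := by
    intro x
    set H : Matrix (Fin n) (Fin n) ℝ := Matrix.of fun a b => pd (pd f a) b x with hH
    have hgH : gMat f x * H = H := by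
      ext k i
      rw [Matrix.mul_apply]
      simp only [gMat, Matrix.of_apply, hH, add_mul]
      rw [Finset.sum_add_distrib]
      have e1 : ∑ m, (if k = m then (1:ℝ) else 0) * pd (pd f m) i x = pd (pd f k) i x := by
        simp [ite_mul, Finset.sum_ite_eq]
      have e2 : ∑ m, pd f k x * pd f m x * pd (pd f m) i x = 0 := by
        have : ∀ m : Fin n, pd f k x * pd f m x * pd (pd f m) i x
            = pd f k x * (pd f m x * pd (pd f m) i x) := fun m => by ring
        rw [Finset.sum_congr rfl fun m _ => this m, ← Finset.mul_sum, hA i x, mul_zero]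
      rw [e1, e2, add_zero]
    have hdetpos : (0:ℝ) < (gMat f x).det := by rw [hdet]; exact hpos x
    have hinv : gInv f x * gMat f x = 1 :=
      Matrix.nonsing_inv_mul _ (isUnit_iff_ne_zero.2 hdetpos.ne')
    have h2 : gInv f x * H = H := by
      calc gInv f x * H = gInv f x * (gMat f x * H) := by rw [hgH]
        _ = gInv f x * gMat f x * H := by rw [Matrix.mul_assoc]
        _ = H := by rw [hinv, Matrix.one_mul]
    have h3 : ∀ i, ∑ j, gInv f x i j * pd (pd f j) i x = (gInv f x * H) i i := by
      intro i; rw [Matrix.mul_apply]; rfl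
    rw [Finset.sum_congr rfl fun i _ => h3 i]
    rw [Finset.sum_congr rfl fun i _ => by rw [h2]]
    rfl
  -- simplified equation
  have hB : ∀ x, ∑ i, pd (pd f i) i x
      = -f x + (∑ i, x i * pd f i x) + lam * Real.sqrt S := by
    intro x
    rw [← htrace x, heq x, hS x]
  -- derivative of the simplified equation
  have hC : ∀ (p : Fin n) (x : Fin n → ℝ),
      ∑ i, pd (pd (pd f i) i) p x = ∑ i, x i * pd (pd f i) p x := by
    intro p x
    have hfd : Differentiable ℝ f := hf.differentiable (by simp)
    have hco : ∀ (x : Fin n → ℝ) (i : Fin n),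
        DifferentiableAt ℝ (fun y : Fin n → ℝ => y i) x := fun x i =>
      (ContinuousLinearMap.proj (R := ℝ) (φ := fun _ : Fin n => ℝ) i).differentiableAt
    have hdiffinner : ∀ (x : Fin n → ℝ) (i : Fin n),
        DifferentiableAt ℝ (fun y : Fin n → ℝ => y i * pd f i y) x := fun x i =>
      (hco x i).mul (hd1 i x)
    have lhs : pd (fun y => ∑ i, pd (pd f i) i y) p x = ∑ i, pd (pd (pd f i) i) p x :=
      pd_sum Finset.univ _ p x (fun i _ => (pd_smooth (pd_smooth hf i) i).differentiable (by simp) x)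
    have funeq : (fun y => ∑ i, pd (pd f i) i y)
        = fun y => (-f y + ∑ i, y i * pd f i y) + lam * Real.sqrt S := by
      funext y
      rw [hB y]
    have rhs : pd (fun y => (-f y + ∑ i, y i * pd f i y) + lam * Real.sqrt S) p x
        = ∑ i, x i * pd (pd f i) p x := by
      rw [pd_add p x (((hfd x).fun_neg).fun_add (DifferentiableAt.fun_sum fun i _ => hdiffinner x i))
        (differentiableAt_const _)]
      rw [pd_of_const (c := lam * Real.sqrt S) (fun _ => rfl) p x, add_zero]
      rw [pd_add p x ((hfd x).fun_neg) (DifferentiableAt.fun_sum fun i _ => hdiffinner x i)]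
      rw [pd_neg p x]
      rw [pd_sum Finset.univ _ p x (fun i _ => hdiffinner x i)]
      have e : ∀ i : Fin n, pd (fun y => y i * pd f i y) p x
          = (if p = i then 1 else 0) * pd f i x + x i * pd (pd f i) p x := by
        intro i
        rw [pd_mul p x (hco x i) (hd1 i x), pd_coord]
      rw [Finset.sum_congr rfl fun i _ => e i, Finset.sum_add_distrib]
      have e2 : ∑ i, (if p = i then (1:ℝ) else 0) * pd f i x = pd f p x := by
        simp [ite_mul, Finset.sum_ite_eq]
      rw [e2]
      ring
    rw [← lhs, funeq, rhs]
  -- second derivative of the constant |Df|^2 : sum of squared Hessian entries vanishes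
  have hHess2 : ∀ x : Fin n → ℝ, ∑ p, ∑ j, (pd (pd f j) p x) ^ 2 = 0 := by
    intro x
    have hterm : ∀ (p : Fin n),
        ∑ j, ((pd (pd f j) p x) ^ 2 + pd f j x * pd (pd (pd f j) p) p x) = 0 := by
      intro p
      have h0 : pd (fun y => ∑ j, pd f j y * pd (pd f j) p y) p x = 0 :=
        pd_of_const (c := 0) (fun y => hA p y) p x
      have h1 : pd (fun y => ∑ j, pd f j y * pd (pd f j) p y) p x
          = ∑ j, ((pd (pd f j) p x) ^ 2 + pd f j x * pd (pd (pd f j) p) p x) := by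
        rw [pd_sum Finset.univ _ p x (fun j _ => (hd1 j x).fun_mul (hd2 j p x))]
        refine Finset.sum_congr rfl fun j _ => ?_
        rw [pd_mul p x (hd1 j x) (hd2 j p x)]
        ring
      rw [← h1, h0]
    have hsum : ∑ p, ∑ j, ((pd (pd f j) p x) ^ 2 + pd f j x * pd (pd (pd f j) p) p x) = 0 :=
      Finset.sum_eq_zero fun p _ => hterm p
    -- third-derivative commutation
    have hcomm3 : ∀ j : Fin n, ∑ p, pd (pd (pd f j) p) p x = ∑ i, x i * pd (pd f i) j x := by
      intro j
      have e : ∀ p : Fin n, pd (pd (pd f j) p) p x = pd (pd (pd f p) p) j x := by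
        intro p
        have e1 : pd (pd f j) p = pd (pd f p) j := funext fun y => pd_comm hf j p y
        rw [e1, pd_comm (pd_smooth hf p) j p x]
      rw [Finset.sum_congr rfl fun p _ => e p, hC j x]
    have hzero : ∑ j, pd f j x * ∑ p, pd (pd (pd f j) p) p x = 0 := by
      rw [Finset.sum_congr rfl fun j _ => by rw [hcomm3 j]]
      have swap : ∑ j, pd f j x * ∑ i, x i * pd (pd f i) j x
          = ∑ i, x i * ∑ j, pd f j x * pd (pd f i) j x := by
        simp_rw [Finset.mul_sum]
        rw [Finset.sum_comm]
        refine Finset.sum_congr rfl fun i _ => Finset.sum_congr rfl fun j _ => by ring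
      rw [swap]
      refine Finset.sum_eq_zero fun i _ => ?_
      have : ∑ j, pd f j x * pd (pd f i) j x = ∑ j, pd f j x * pd (pd f j) i x :=
        Finset.sum_congr rfl fun j _ => by rw [pd_comm hf i j x]
      rw [this, hA i x, mul_zero]
    have expand : ∑ p, ∑ j, ((pd (pd f j) p x) ^ 2 + pd f j x * pd (pd (pd f j) p) p x)
        = (∑ p, ∑ j, (pd (pd f j) p x) ^ 2)
          + ∑ j, pd f j x * ∑ p, pd (pd (pd f j) p) p x := by
      rw [Finset.sum_congr rfl fun p _ => Finset.sum_add_distrib, Finset.sum_add_distrib]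
      congr 1
      rw [Finset.sum_comm]
      exact Finset.sum_congr rfl fun j _ => (Finset.mul_sum _ _ _).symm
    rw [expand, hzero, add_zero] at hsum
    exact hsum
  have hHess : ∀ (p i : Fin n) (x : Fin n → ℝ), pd (pd f i) p x = 0 := by
    intro p i x
    have h := hHess2 x
    have h1 : ∀ q ∈ (Finset.univ : Finset (Fin n)),
        (0:ℝ) ≤ ∑ j, (pd (pd f j) q x) ^ 2 := fun q _ =>
      Finset.sum_nonneg fun j _ => sq_nonneg _
    have h2 := (Finset.sum_eq_zero_iff_of_nonneg h1).1 h p (Finset.mem_univ p)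
    have h3 := (Finset.sum_eq_zero_iff_of_nonneg
      (fun j _ => sq_nonneg (pd (pd f j) p x))).1 h2 i (Finset.mem_univ i)
    exact pow_eq_zero_iff two_ne_zero |>.mp h3
  refine ⟨hHess, ?_⟩
  -- affine conclusion
  have hfd : Differentiable ℝ f := hf.differentiable (by simp)
  have hbconst : ∀ (i : Fin n) (x : Fin n → ℝ), pd f i x = pd f i 0 := by
    intro i x
    refine is_const_of_fderiv_eq_zero (hd1 i) (fun z => ?_) x 0
    refine ContinuousLinearMap.ext fun v => ?_
    rw [clm_apply_eq_sum]
    simp only [ContinuousLinearMap.zero_apply]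
    refine Finset.sum_eq_zero fun p _ => ?_
    have : fderiv ℝ (pd f i) z (Pi.single p 1) = pd (pd f i) p z := rfl
    rw [this, hHess p i z, mul_zero]
  set L : (Fin n → ℝ) →L[ℝ] ℝ := fderiv ℝ f 0 with hL
  have hfderiv_const : ∀ x, fderiv ℝ f x = L := by
    intro x
    refine ContinuousLinearMap.ext fun v => ?_
    rw [clm_apply_eq_sum, clm_apply_eq_sum]
    refine Finset.sum_congr rfl fun i _ => ?_
    have : fderiv ℝ f x (Pi.single i 1) = pd f i x := rfl
    rw [this, hbconst i x]
    rfl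
  have hφ : ∀ x, f x - L x = f 0 - L 0 := fun x =>
    is_const_of_fderiv_eq_zero (hfd.sub L.differentiable) (fun z => by
      rw [fderiv_sub (hfd z) L.differentiableAt, L.fderiv, hfderiv_const z, sub_self]) x 0
  refine ⟨fun i => pd f i 0, f 0, fun x => ?_⟩
  have h1 := hφ x
  have h2 : L x = ∑ i, pd f i 0 * x i := by
    rw [clm_apply_eq_sum]
    exact Finset.sum_congr rfl fun i _ => by rw [mul_comm]; rfl
  have h3 : L 0 = 0 := map_zero L
  rw [h3, sub_zero] at h1
  linarith [h1, h2]
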